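/- For an integer k ≥ 1 and c ≥ 0, let X_c be a Poisson random variable with mean c and define m̃(k,c) := E[X_c/(X_c+2k+1)²] + 2·E[X_c(X_c−1)/(X_c+2k+1)²]. Then, as a function of c, m̃(k,·) is right-continuous on [0,∞), non-decreasing, and m̃(k,0) = 0; moreover there exists c₂(k) ∈ (0,∞) such that m̃(k,c) > 1 for all c > c₂(k). -/

import Mathlib

/-!
With `w(m) = (2m² - m)/(m + 2k + 1)²` one has `m̃(k,c) = E[w(X_c)]`, and `w` is bounded,
non-decreasing and vanishes at `0`. Differentiating the Poisson series term by term gives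
`d/dc E[w(X_c)] = E[w(X_c + 1) - w(X_c)] ≥ 0`, whence continuity and monotonicity. Finally
`w ≥ 3/2` from `16k + 16` on, while `P(X_c < 16k + 16) → 0` as `c → ∞`, so `m̃(k,c) > 1`
for large `c`.
-/

open Filter
open scoped ENNReal Topology Classical

noncomputable section

/-- the Poisson(c) probability mass function -/
def poissonPMF (c : ℝ) (m : ℕ) : ℝ := Real.exp (-c) * c ^ m / (Nat.factorial m)

/-- `m̃(k,c) = E[X/(X+2k+1)²] + 2·E[X(X−1)/(X+2k+1)²]`, `X ∼ Poisson(c)` -/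
def mtilde (k : ℕ) (c : ℝ) : ℝ :=
  (∑' m : ℕ, poissonPMF c m * ((m : ℝ) / ((m : ℝ) + 2 * k + 1) ^ 2)) +
    2 * ∑' m : ℕ, poissonPMF c m * ((m : ℝ) * ((m : ℝ) - 1) / ((m : ℝ) + 2 * k + 1) ^ 2)

open Nat Set

def egf (a : ℕ → ℝ) (x : ℝ) : ℝ := ∑' m, a m * (x ^ m / m !)

def poissonExpectation (a : ℕ → ℝ) (c : ℝ) : ℝ := ∑' m, poissonPMF c m * a m

theorem poissonPMF_eq_exp_mul (c : ℝ) (m : ℕ) :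
    poissonPMF c m = Real.exp (-c) * (c ^ m / m !) :=
  mul_div_assoc _ _ _

theorem poissonPMF_nonneg {c : ℝ} (hc : 0 ≤ c) (m : ℕ) : 0 ≤ poissonPMF c m := by
  unfold poissonPMF
  positivity

theorem hasSum_poissonPMF (c : ℝ) : HasSum (poissonPMF c) 1 := by
  have h := (NormedSpace.expSeries_div_hasSum_exp c).mul_left (Real.exp (-c))
  rwa [← Real.exp_eq_exp_ℝ, ← Real.exp_add, neg_add_cancel, Real.exp_zero,
    ← funext (poissonPMF_eq_exp_mul c)] at h

theorem poissonExpectation_eq_exp_mul_egf (a : ℕ → ℝ) (c : ℝ) :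
    poissonExpectation a c = Real.exp (-c) * egf a c := by
  simp only [poissonExpectation, egf, ← tsum_mul_left, poissonPMF_eq_exp_mul]
  exact tsum_congr fun m => by ring

theorem tendsto_sum_range_poissonPMF_atTop (M : ℕ) :
    Tendsto (fun c => ∑ m ∈ Finset.range M, poissonPMF c m) atTop (𝓝 0) := by
  rw [← Finset.sum_const_zero (s := Finset.range M)]
  refine tendsto_finsetSum _ fun m _ => ?_
  have h := (Real.tendsto_pow_mul_exp_neg_atTop_nhds_zero m).div_const (m ! : ℝ)
  rw [zero_div] at h
  exact h.congr fun c => by rw [poissonPMF]; ring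

section BoundedCoefficients

variable {a : ℕ → ℝ} {C : ℝ}

theorem summable_mul_pow_div_factorial (ha : ∀ m, |a m| ≤ C) (x : ℝ) :
    Summable fun m => a m * (x ^ m / m !) := by
  refine .of_norm_bounded ((Real.summable_pow_div_factorial |x|).mul_left C) fun m => ?_
  rw [Real.norm_eq_abs, abs_mul, abs_div, abs_pow, Nat.abs_cast]
  gcongr
  exact ha m

theorem hasDerivAt_egf (ha : ∀ m, |a m| ≤ C) (x : ℝ) :
    HasDerivAt (egf a) (egf (fun m => a (m + 1)) x) x := by
  -- after splitting off `a 0`, the `m`-th term differentiates to the `m`-th term of the answer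
  have hshift : egf a = fun y => a 0 + ∑' m, a (m + 1) * (y ^ (m + 1) / (m + 1)!) := by
    funext y
    rw [egf, (summable_mul_pow_div_factorial ha y).tsum_eq_zero_add]
    simp
  have hterm (m : ℕ) (y : ℝ) :
      HasDerivAt (fun y => a (m + 1) * (y ^ (m + 1) / (m + 1)!)) (a (m + 1) * (y ^ m / m !)) y := by
    refine (((hasDerivAt_pow (m + 1) y).div_const ((m + 1)! : ℝ)).const_mul _).congr_deriv ?_
    rw [Nat.factorial_succ]
    push_cast
    field_simp
  rw [hshift]
  refine (hasDerivAt_tsum_of_isPreconnected (t := Metric.ball 0 (|x| + 1))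
    ((Real.summable_pow_div_factorial (|x| + 1)).mul_left C) Metric.isOpen_ball
    (convex_ball _ _).isPreconnected (fun m y _ => hterm m y) (fun m y hy => ?_)
    (Metric.mem_ball_self (by positivity)) ?_ (by simp)).const_add (a 0)
  · rw [mem_ball_zero_iff, Real.norm_eq_abs] at hy
    rw [Real.norm_eq_abs, abs_mul, abs_div, abs_pow, Nat.abs_cast]
    have hC : 0 ≤ C := (abs_nonneg _).trans (ha 0)
    gcongr
    exact ha _
  · simp

theorem summable_poissonPMF_mul (ha : ∀ m, |a m| ≤ C) (c : ℝ) :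
    Summable fun m => poissonPMF c m * a m := by
  refine ((summable_mul_pow_div_factorial ha c).mul_left (Real.exp (-c))).congr fun m => ?_
  rw [poissonPMF_eq_exp_mul]
  ring

theorem hasDerivAt_poissonExpectation (ha : ∀ m, |a m| ≤ C) (c : ℝ) :
    HasDerivAt (poissonExpectation a)
      (poissonExpectation (fun m => a (m + 1) - a m) c) c := by
  have hexp : HasDerivAt (fun x => Real.exp (-x)) (-Real.exp (-c)) c := by
    simpa using (hasDerivAt_neg c).exp
  rw [funext (poissonExpectation_eq_exp_mul_egf a)]
  refine (hexp.mul (hasDerivAt_egf ha c)).congr_deriv ?_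
  simp only [poissonExpectation_eq_exp_mul_egf, egf, sub_mul]
  rw [(summable_mul_pow_div_factorial (fun m => ha (m + 1)) c).tsum_sub
    (summable_mul_pow_div_factorial ha c)]
  ring

theorem differentiable_poissonExpectation (ha : ∀ m, |a m| ≤ C) :
    Differentiable ℝ (poissonExpectation a) :=
  fun c => (hasDerivAt_poissonExpectation ha c).differentiableAt

theorem monotoneOn_poissonExpectation (ha : ∀ m, |a m| ≤ C) (hmono : Monotone a) :
    MonotoneOn (poissonExpectation a) (Ici 0) := by
  refine monotoneOn_of_deriv_nonneg (convex_Ici 0)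
    (differentiable_poissonExpectation ha).continuous.continuousOn
    (differentiable_poissonExpectation ha).differentiableOn fun c hc => ?_
  rw [interior_Ici] at hc
  rw [(hasDerivAt_poissonExpectation ha c).deriv]
  exact tsum_nonneg fun m =>
    mul_nonneg (poissonPMF_nonneg (le_of_lt hc) m) (sub_nonneg.2 (hmono m.le_succ))

theorem mul_one_sub_sum_range_poissonPMF_le (ha : ∀ m, |a m| ≤ C) (ha0 : ∀ m, 0 ≤ a m)
    {b : ℝ} {M : ℕ} (hb : ∀ m, M ≤ m → b ≤ a m) {c : ℝ} (hc : 0 ≤ c) :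
    b * (1 - ∑ m ∈ Finset.range M, poissonPMF c m) ≤ poissonExpectation a c := by
  have hsum := summable_poissonPMF_mul ha c
  have htail : 1 - ∑ m ∈ Finset.range M, poissonPMF c m = ∑' m, poissonPMF c (m + M) := by
    rw [← (hasSum_poissonPMF c).tsum_eq,
      ← (hasSum_poissonPMF c).summable.sum_add_tsum_nat_add M, add_sub_cancel_left]
  rw [htail, poissonExpectation, ← hsum.sum_add_tsum_nat_add M, ← tsum_mul_left]
  refine le_add_of_nonneg_of_le
    (Finset.sum_nonneg fun m _ => mul_nonneg (poissonPMF_nonneg hc m) (ha0 m)) ?_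
  refine ((hasSum_poissonPMF c).summable.comp_injective (add_left_injective M)).mul_left b
    |>.tsum_le_tsum (fun m => ?_) ((summable_nat_add_iff M).2 hsum)
  rw [mul_comm]
  exact mul_le_mul_of_nonneg_left (hb _ (Nat.le_add_left M m)) (poissonPMF_nonneg hc _)

theorem eventually_lt_poissonExpectation (ha : ∀ m, |a m| ≤ C) (ha0 : ∀ m, 0 ≤ a m)
    {b b' : ℝ} (hb' : b' < b) {M : ℕ} (hb : ∀ m, M ≤ m → b ≤ a m) :
    ∀ᶠ c in atTop, b' < poissonExpectation a c := by
  have hlim :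
      Tendsto (fun c => b * (1 - ∑ m ∈ Finset.range M, poissonPMF c m)) atTop (𝓝 b) := by
    simpa using ((tendsto_sum_range_poissonPMF_atTop M).const_sub 1).const_mul b
  filter_upwards [hlim.eventually (lt_mem_nhds hb'), eventually_ge_atTop 0] with c hlt hc
  exact hlt.trans_le (mul_one_sub_sum_range_poissonPMF_le ha ha0 hb hc)

end BoundedCoefficients

-- `m / d + 2 m (m - 1) / d = (2m² - m) / d`: the two expectations in `mtilde` merge into one.
def offspringWeight (k m : ℕ) : ℝ := (2 * (m : ℝ) ^ 2 - m) / ((m : ℝ) + 2 * k + 1) ^ 2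

theorem offspringWeight_nonneg (k m : ℕ) : 0 ≤ offspringWeight k m := by
  refine div_nonneg ?_ (sq_nonneg _)
  rcases m with _ | m
  · simp
  · push_cast
    nlinarith [(m.cast_nonneg : (0 : ℝ) ≤ m)]

theorem abs_offspringWeight_le_two (k m : ℕ) : |offspringWeight k m| ≤ 2 := by
  rw [abs_of_nonneg (offspringWeight_nonneg k m), offspringWeight, div_le_iff₀ (by positivity)]
  nlinarith [(m.cast_nonneg : (0 : ℝ) ≤ m), (k.cast_nonneg : (0 : ℝ) ≤ k)]

theorem monotone_offspringWeight (k : ℕ) : Monotone (offspringWeight k) := by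
  refine monotone_nat_of_le_succ fun m => ?_
  have hm : (0 : ℝ) ≤ m := m.cast_nonneg
  have hk : (0 : ℝ) ≤ k := k.cast_nonneg
  rw [offspringWeight, offspringWeight, div_le_div_iff₀ (by positivity) (by positivity)]
  push_cast
  nlinarith [mul_nonneg hm hk, mul_nonneg (mul_nonneg hm hm) hk, mul_nonneg (mul_nonneg hm hk) hk,
    mul_nonneg hk hk]

theorem three_halves_le_offspringWeight {k m : ℕ} (hm : 16 * k + 16 ≤ m) :
    3 / 2 ≤ offspringWeight k m := by
  have hm' : 16 * (k : ℝ) + 16 ≤ m := by exact_mod_cast hm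
  rw [offspringWeight, le_div_iff₀ (by positivity)]
  nlinarith [(k.cast_nonneg : (0 : ℝ) ≤ k)]

theorem mtilde_eq_poissonExpectation (k : ℕ) :
    mtilde k = poissonExpectation (offspringWeight k) := by
  funext c
  have hd (m : ℕ) : 0 < ((m : ℝ) + 2 * k + 1) ^ 2 := by positivity
  have hlin (m : ℕ) : |(m : ℝ) / ((m : ℝ) + 2 * k + 1) ^ 2| ≤ 1 := by
    rw [abs_div, abs_of_pos (hd m), div_le_one (hd m), abs_of_nonneg m.cast_nonneg]
    nlinarith [(m.cast_nonneg : (0 : ℝ) ≤ m), (k.cast_nonneg : (0 : ℝ) ≤ k)]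
  have hquad (m : ℕ) : |(m : ℝ) * ((m : ℝ) - 1) / ((m : ℝ) + 2 * k + 1) ^ 2| ≤ 1 := by
    rw [abs_div, abs_of_pos (hd m), div_le_one (hd m), abs_le]
    constructor <;> nlinarith [(m.cast_nonneg : (0 : ℝ) ≤ m), (k.cast_nonneg : (0 : ℝ) ≤ k)]
  rw [mtilde, poissonExpectation, ← tsum_mul_left, ← (summable_poissonPMF_mul hlin c).tsum_add
    ((summable_poissonPMF_mul hquad c).mul_left 2)]
  refine tsum_congr fun m => ?_
  rw [offspringWeight]
  field_simp
  ring

theorem supercritical_mean_offspring_general (k : ℕ) :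
    (∀ c : ℝ, 0 ≤ c → ContinuousWithinAt (mtilde k) (Set.Ici c) c) ∧
    MonotoneOn (mtilde k) (Set.Ici (0 : ℝ)) ∧
    mtilde k 0 = 0 ∧
    ∃ c₂ : ℝ, 0 < c₂ ∧ ∀ c : ℝ, c₂ < c → 1 < mtilde k c := by
  rw [mtilde_eq_poissonExpectation]
  have hbdd := abs_offspringWeight_le_two k
  refine ⟨fun c _ => (differentiable_poissonExpectation hbdd).continuous.continuousWithinAt,
    monotoneOn_poissonExpectation hbdd (monotone_offspringWeight k), ?_, ?_⟩
  · refine (tsum_congr fun m => ?_).trans tsum_zero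
    rcases m with _ | m <;> simp [poissonPMF, offspringWeight]
  · have hlarge := eventually_lt_poissonExpectation hbdd (offspringWeight_nonneg k)
      (by norm_num : (1 : ℝ) < 3 / 2) fun m => three_halves_le_offspringWeight
    obtain ⟨c₀, hc₀⟩ := hlarge.exists_forall_of_atTop
    exact ⟨max c₀ 1, by positivity, fun c hc => hc₀ c (le_max_left _ _ |>.trans hc.le)⟩

theorem supercritical_mean_offspring (k : ℕ) (hk : 1 ≤ k) :
    (∀ c : ℝ, 0 ≤ c → ContinuousWithinAt (mtilde k) (Set.Ici c) c) ∧
    MonotoneOn (mtilde k) (Set.Ici (0 : ℝ)) ∧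
    mtilde k 0 = 0 ∧
    ∃ c₂ : ℝ, 0 < c₂ ∧ ∀ c : ℝ, c₂ < c → 1 < mtilde k c :=
  supercritical_mean_offspring_general k

end
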